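/- arXiv:1502.01793 — 3 statements merged into one kernel-verified Lean document; each statement's English description precedes it below -/
import Mathlib

section
/- Let β be a Pisot number, N a positive integer, M a finite subset of (1/N)·ℤ[β], and K > 0. Then the set of all values C⁽ⁿ⁾ attained by all sequences (C⁽ⁿ⁾)_{n≥0} satisfying C⁽⁰⁾ ∈ M, C⁽ⁿ⁺¹⁾ = β·C⁽ⁿ⁾ + mₙ for some mₙ ∈ M, and |C⁽ⁿ⁾| ≤ K for all n, is a finite set. -/
open MeasureTheory Set Filter

noncomputable section

/-- The lattice `L = ℤη₁ + ℤη₂`. -/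
def lat (η₁ η₂ : ℂ) : Set ℂ := {d : ℂ | ∃ m n : ℤ, d = (m : ℂ) * η₁ + (n : ℂ) * η₂}

/-- The fundamental domain `X = {ξ + xη₁ + yη₂ : x, y ∈ [0,1)}`. -/
def fund (ξ η₁ η₂ : ℂ) : Set ℂ :=
  {z : ℂ | ∃ x y : ℝ, x ∈ Set.Ico (0:ℝ) 1 ∧ y ∈ Set.Ico (0:ℝ) 1 ∧
    z = ξ + (x : ℂ) * η₁ + (y : ℂ) * η₂}

/-- Covering radius of the lattice: infimum of `R > 0` such that every point of `ℂ`
is within distance `R` of a lattice point. -/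
def covRad (η₁ η₂ : ℂ) : ℝ :=
  sInf {R : ℝ | 0 < R ∧ ∀ z : ℂ, ∃ d ∈ lat η₁ η₂, dist z d ≤ R}

/-- The constant ν₁(θ). -/
def nu1 (θ : ℝ) : ℝ :=
  if 1 / 2 < Real.tan (θ / 2) ∧ Real.tan (θ / 2) < 2 then 2
  else (1 + |Real.cos θ|) / (2 * (Real.sin θ + |Real.cos θ| - 1))

/-- The constant ν₂(θ). -/
def nu2 (θ : ℝ) : ℝ :=
  1 + Real.sqrt 2 / (Real.sin θ * Real.sqrt (1 + |Real.cos θ|))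

/-- The width `w(X) = min{|η₁|, |η₂|}·sin θ`. -/
def width (θ : ℝ) (η₁ η₂ : ℂ) : ℝ :=
  min ‖η₁‖ ‖η₂‖ * Real.sin θ

/-- An ACIM of `T` on `X`: a Borel probability measure concentrated on `X`,
`T`-invariant, and absolutely continuous w.r.t. 2-dimensional Lebesgue measure. -/
def IsACIM (X : Set ℂ) (T : ℂ → ℂ) (μ : Measure ℂ) : Prop :=
  IsProbabilityMeasure μ ∧ μ Xᶜ = 0 ∧
    (∀ A : Set ℂ, MeasurableSet A → μ (T ⁻¹' A) = μ A) ∧ μ ≪ volume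

/-- `S` is a finite union of (line) segments. -/
def IsFUS (S : Set ℂ) : Prop :=
  ∃ F : Finset (ℂ × ℂ), S = ⋃ p ∈ F, segment ℝ p.1 p.2

/-- A Pisot number: a real algebraic integer `β > 1` all of whose other conjugates
have absolute value strictly less than 1. -/
def IsPisot (β : ℝ) : Prop :=
  1 < β ∧ IsIntegral ℤ β ∧
    ∀ z : ℂ, Polynomial.aeval z (minpoly ℤ β) = 0 → z ≠ (β : ℂ) → ‖z‖ < 1

/-- `B₋ₜ(A)`: the points of `A` at distance at least `t` from the boundary of `A`. -/
def innerPart (t : ℝ) (A : Set ℂ) : Set ℂ := {x ∈ A | t ≤ Metric.infDist x (frontier A)}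

/-- `S` is a `t`-covering of `A`: every point of `A` is within distance `t` of `S`. -/
def IsCovering (t : ℝ) (S A : Set ℂ) : Prop := ∀ x ∈ A, ∃ s ∈ S, dist x s ≤ t

/-- `Y = X ∖ ⋃_{n ∈ ℤ} Tⁿ(∂X)`: removal of all forward images and preimages
of the boundary. -/
def Yset (X : Set ℂ) (T : ℂ → ℂ) : Set ℂ :=
  X \ ((⋃ n : ℕ, T^[n] '' frontier X) ∪ (⋃ n : ℕ, {z ∈ X | T^[n] z ∈ frontier X}))

/-!
Multiplying by `N`, every value `N·C⁽ⁿ⁾` is an algebraic integer of the number field `ℚ(β)`.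
Its image under the identity embedding is bounded by `N·K`; under every other embedding `σ` the
recurrence contracts, since `|σ(β)| < 1`, so the images stay below `max |σ(N·M)| / (1 - |σ(β)|)`.
Algebraic integers of a number field all of whose conjugates are bounded form a finite set.
-/

open IntermediateField

def IsAffineOrbit {R : Type*} [Semiring R] (z : R) (W : Set R) (D : ℕ → R) : Prop :=
  D 0 ∈ W ∧ ∀ k, ∃ w ∈ W, D (k + 1) = z * D k + w

namespace IsAffineOrbit

variable {R S : Type*}

section Semiring

variable [Semiring R] [Semiring S] {z : R} {W : Set R} {D : ℕ → R}

theorem map (h : IsAffineOrbit z W D) (f : R →+* S) : IsAffineOrbit (f z) (f '' W) (f ∘ D) := by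
  refine ⟨mem_image_of_mem f h.1, fun k => ?_⟩
  obtain ⟨w, hw, hk⟩ := h.2 k
  exact ⟨f w, mem_image_of_mem f hw, by simp [hk]⟩

theorem mem {T : Type*} [SetLike T R] [AddMemClass T R] [MulMemClass T R] {s : T}
    (h : IsAffineOrbit z W D) (hz : z ∈ s) (hW : W ⊆ s) (k : ℕ) : D k ∈ s := by
  induction k with
  | zero => exact hW h.1
  | succ k ih =>
    obtain ⟨w, hw, hk⟩ := h.2 k
    rw [hk]
    exact add_mem (mul_mem hz ih) (hW hw)

end Semiring

theorem const_mul [CommSemiring R] {z : R} {W : Set R} {D : ℕ → R} (h : IsAffineOrbit z W D)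
    (a : R) : IsAffineOrbit z ((a * ·) '' W) (fun k => a * D k) := by
  refine ⟨mem_image_of_mem _ h.1, fun k => ?_⟩
  obtain ⟨w, hw, hk⟩ := h.2 k
  exact ⟨a * w, mem_image_of_mem _ hw, by simp only [hk]; ring⟩

theorem comap [Ring R] [Ring S] {f : S →+* R} {z : S} {W : Set R}
    {D : ℕ → S} (h : IsAffineOrbit (f z) W (f ∘ D)) : IsAffineOrbit z (f ⁻¹' W) D := by
  refine ⟨h.1, fun k => ⟨D (k + 1) - z * D k, ?_, (add_sub_cancel _ _).symm⟩⟩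
  obtain ⟨w, hw, hk⟩ := h.2 k
  have hw' : f (D (k + 1) - z * D k) = w := by
    simp only [Function.comp_apply] at hk
    rw [map_sub, map_mul, hk, add_sub_cancel_left]
  rwa [mem_preimage, hw']

theorem norm_le [SeminormedRing R] {z : R} {W : Set R} {D : ℕ → R} (h : IsAffineOrbit z W D)
    (hz : ‖z‖ < 1) {b : ℝ} (hW : ∀ w ∈ W, ‖w‖ ≤ b) (k : ℕ) : ‖D k‖ ≤ b / (1 - ‖z‖) := by
  have hz' : 0 < 1 - ‖z‖ := sub_pos.mpr hz
  induction k with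
  | zero =>
    have hb : 0 ≤ b := (norm_nonneg _).trans (hW _ h.1)
    refine (hW _ h.1).trans ?_
    rw [le_div_iff₀ hz']
    nlinarith [norm_nonneg z]
  | succ k ih =>
    obtain ⟨w, hw, hk⟩ := h.2 k
    calc ‖D (k + 1)‖ ≤ ‖z‖ * ‖D k‖ + ‖w‖ :=
          hk ▸ (norm_add_le _ _).trans (by gcongr; exact norm_mul_le _ _)
      _ ≤ ‖z‖ * (b / (1 - ‖z‖)) + b := by gcongr; exact hW w hw
      _ = b / (1 - ‖z‖) := by field_simp; ring

end IsAffineOrbit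

theorem NumberField.finite_of_isIntegral_of_forall_norm_le {K A : Type*} [Field K] [NumberField K]
    [NormedField A] [CharZero A] [IsAlgClosed A] [NormedAlgebra ℚ A] {T : Set K}
    (hint : ∀ x ∈ T, IsIntegral ℤ x) (hbdd : ∀ φ : K →+* A, ∃ b, ∀ x ∈ T, ‖φ x‖ ≤ b) :
    T.Finite := by
  choose b hb using hbdd
  refine (Embeddings.finite_of_norm_le K A (⨆ φ, b φ)).subset fun x hx =>
    ⟨hint x hx, fun φ => (hb φ x hx).trans (le_ciSup (finite_range b).bddAbove φ)⟩

theorem NumberField.finite_setOf_isAffineOrbit {F : Type*} [Field F] [NumberField F]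
    (ι : F →+* ℂ) {z : F} (hz_int : IsIntegral ℤ z) (hz : ∀ φ : F →+* ℂ, φ ≠ ι → ‖φ z‖ < 1)
    {W : Set F} (hW : W.Finite) (hW_int : ∀ w ∈ W, IsIntegral ℤ w) (K : ℝ) :
    {x : F | ∃ D, IsAffineOrbit z W D ∧ (∀ k, ‖ι (D k)‖ ≤ K) ∧ ∃ n, D n = x}.Finite := by
  refine finite_of_isIntegral_of_forall_norm_le (A := ℂ) ?_ fun φ => ?_
  · rintro _ ⟨D, hD, -, n, rfl⟩
    exact hD.mem (s := integralClosure ℤ F) hz_int hW_int n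
  by_cases hφ : φ = ι
  · subst hφ
    exact ⟨K, by rintro _ ⟨D, -, hK, n, rfl⟩; exact hK n⟩
  obtain ⟨b, hb⟩ := isBounded_iff_forall_norm_le.mp (hW.image φ).isBounded
  exact ⟨b / (1 - ‖φ z‖), by rintro _ ⟨D, hD, -, n, rfl⟩; exact (hD.map φ).norm_le (hz φ hφ) hb n⟩

theorem IntermediateField.adjoin_simple_ringHom_ext {L E : Type*} [Field L] [Algebra ℚ L]
    [DivisionRing E] {α : L} {φ ψ : ℚ⟮α⟯ →+* E}
    (h : φ (AdjoinSimple.gen ℚ α) = ψ (AdjoinSimple.gen ℚ α)) : φ = ψ := by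
  ext ⟨x, hx⟩
  induction hx using adjoin_induction with
  | mem x hx => obtain rfl := Set.mem_singleton_iff.mp hx; exact h
  | algebraMap r =>
    have hr : ∀ hr, (⟨algebraMap ℚ L r, hr⟩ : ℚ⟮α⟯) = r := fun _ => Subtype.ext (by simp)
    rw [hr, map_ratCast, map_ratCast]
  | add x y hx hy ihx ihy =>
    exact (map_add φ ⟨x, hx⟩ ⟨y, hy⟩).trans ((congrArg₂ _ ihx ihy).trans (map_add ψ _ _).symm)
  | inv x hx ih =>
    exact (map_inv₀ φ ⟨x, hx⟩).trans ((congrArg _ ih).trans (map_inv₀ ψ _).symm)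
  | mul x y hx hy ihx ihy =>
    exact (map_mul φ ⟨x, hx⟩ ⟨y, hy⟩).trans ((congrArg₂ _ ihx ihy).trans (map_mul ψ _ _).symm)

theorem minpoly.aeval_ringHom_algebraMap {B L E : Type*} [CommRing B] [Ring L] [CommRing E] [Algebra B L]
    (hB : Function.Injective (algebraMap B L)) (φ : B →+* E) (x : B) :
    Polynomial.aeval (φ x) (minpoly ℤ (algebraMap B L x)) = 0 := by
  rw [minpoly.algebraMap_eq hB, ← φ.toIntAlgHom_coe, Polynomial.aeval_algHom_apply, minpoly.aeval,
    map_zero]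

theorem IsPisot.norm_lt_one {β : ℝ} (hβ : IsPisot β) {φ : ℚ⟮β⟯ →+* ℂ}
    (hφ : φ ≠ Complex.ofRealHom.comp (algebraMap ℚ⟮β⟯ ℝ)) : ‖φ (AdjoinSimple.gen ℚ β)‖ < 1 :=
  hβ.2.2 _ (minpoly.aeval_ringHom_algebraMap (algebraMap ℚ⟮β⟯ ℝ).injective φ _) fun h =>
    hφ (adjoin_simple_ringHom_ext h)

theorem IntermediateField.mem_adjoin_simple_of_mem_adjoin_int {L : Type*} [Field L]
    [Algebra ℚ L] {α r : L} (hr : r ∈ Algebra.adjoin ℤ {α}) : r ∈ ℚ⟮α⟯ :=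
  Algebra.adjoin_singleton_le (S := ℚ⟮α⟯.toSubalgebra.restrictScalars ℤ)
    (mem_adjoin_simple_self ℚ α) hr

theorem IsAffineOrbit.exists_lift_adjoin_simple {L : Type*} [Field L] [Algebra ℚ L] {α : L}
    {W : Set L} (hW : W ⊆ Algebra.adjoin ℤ {α}) {D : ℕ → L} (hD : IsAffineOrbit α W D) :
    ∃ D' : ℕ → ℚ⟮α⟯, IsAffineOrbit (AdjoinSimple.gen ℚ α) (algebraMap ℚ⟮α⟯ L ⁻¹' W) D' ∧
      ∀ k, (D' k : L) = D k := by
  have hmem k : D k ∈ ℚ⟮α⟯ :=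
    mem_adjoin_simple_of_mem_adjoin_int (hD.mem (Algebra.self_mem_adjoin_singleton ℤ α) hW k)
  refine ⟨fun k => ⟨D k, hmem k⟩, ?_, fun k => rfl⟩
  exact IsAffineOrbit.comap (f := algebraMap ℚ⟮α⟯ L) (z := AdjoinSimple.gen ℚ α) hD

theorem statement11_general
    (β : ℝ) (hβ : IsPisot β) (N : ℕ) (hN : 0 < N)
    (M : Set ℝ) (hMfin : M.Finite)
    (hM : M ⊆ {x : ℝ | ∃ y ∈ Algebra.adjoin ℤ ({β} : Set ℝ), x = y / (N : ℝ)})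
    (K : ℝ) :
    Set.Finite {c : ℝ | ∃ C : ℕ → ℝ, C 0 ∈ M ∧
      (∀ n : ℕ, ∃ m ∈ M, C (n + 1) = β * C n + m) ∧
      (∀ n : ℕ, |C n| ≤ K) ∧ ∃ n : ℕ, C n = c} := by
  let f := algebraMap ℚ⟮β⟯ ℝ
  have : FiniteDimensional ℚ ℚ⟮β⟯ := adjoin.finiteDimensional hβ.2.1.tower_top
  have : NumberField ℚ⟮β⟯ := ⟨⟩
  have hNM : ((N : ℝ) * ·) '' M ⊆ Algebra.adjoin ℤ {β} := by
    rintro _ ⟨m, hm, rfl⟩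
    obtain ⟨y, hy, rfl⟩ := hM hm
    dsimp only
    rwa [mul_div_cancel₀ y (by positivity : (N : ℝ) ≠ 0)]
  have hT := NumberField.finite_setOf_isAffineOrbit (Complex.ofRealHom.comp f)
    (z := AdjoinSimple.gen ℚ β)
    ((isIntegral_algebraMap_iff f.injective).mp hβ.2.1) (fun φ hφ => hβ.norm_lt_one hφ)
    ((hMfin.image _).preimage f.injective.injOn)
    (fun w hw => (isIntegral_algebraMap_iff f.injective).mp
      (adjoin_le_integralClosure hβ.2.1 (hNM hw))) (N * K)
  refine (hT.image fun x => f x / N).subset ?_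
  rintro _ ⟨C, hC0, hrec, hbd, n, rfl⟩
  obtain ⟨D, hD, hDC⟩ := (IsAffineOrbit.const_mul ⟨hC0, hrec⟩ (N : ℝ)).exists_lift_adjoin_simple hNM
  refine ⟨D n, ⟨D, hD, fun k => ?_, n, rfl⟩, ?_⟩
  · change ‖((D k : ℝ) : ℂ)‖ ≤ N * K
    rw [Complex.norm_real, Real.norm_eq_abs, hDC, abs_mul, Nat.abs_cast]
    exact mul_le_mul_of_nonneg_left (hbd k) N.cast_nonneg
  · change (D n : ℝ) / N = C n
    rw [hDC, mul_div_cancel_left₀ _ (by positivity)]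

/-- For a Pisot number β, a finite set M ⊆ (1/N)·ℤ[β] and a bound K,
the set of all values attained by bounded sequences C⁽⁰⁾ ∈ M,
C⁽ⁿ⁺¹⁾ = β·C⁽ⁿ⁾ + mₙ with mₙ ∈ M and |C⁽ⁿ⁾| ≤ K, is finite. -/
theorem statement11
    (β : ℝ) (hβ : IsPisot β) (N : ℕ) (hN : 0 < N)
    (M : Set ℝ) (hMfin : M.Finite)
    (hM : M ⊆ {x : ℝ | ∃ y ∈ Algebra.adjoin ℤ ({β} : Set ℝ), x = y / (N : ℝ)})
    (K : ℝ) (hK : 0 < K) :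
    Set.Finite {c : ℝ | ∃ C : ℕ → ℝ, C 0 ∈ M ∧
      (∀ n : ℕ, ∃ m ∈ M, C (n + 1) = β * C n + m) ∧
      (∀ n : ℕ, |C n| ≤ K) ∧ ∃ n : ℕ, C n = c} :=
  statement11_general β hβ N hN M hMfin hM K
end
end

section
/- For every θ ∈ (0, π), ν₁(θ) ≤ ν₂(θ); consequently B₁ ≤ B₂ for every fundamental domain X. -/
open MeasureTheory Set Filter

noncomputable section

/- Both constants are compared with `1 + 1 / sin θ`, which is at most `ν₂(θ)` because
`1 + |cos θ| ≤ 2`. When `tan (θ/2)` lies in `(1/2, 2)`, `ν₁(θ) = 2 ≤ 1 + 1 / sin θ`.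
Otherwise the half-angle formula `cos θ = (1 - t²)/(1 + t²)`, `t = tan (θ/2)`, gives
`|cos θ| ≥ 3/5`, and with `s = sin θ`, `c = |cos θ|`, `s² + c² = 1` the inequality
`(1 + c)/(2(s + c - 1)) ≤ 1 + 1/s` is polynomial. -/

open Real

lemma one_add_inv_sin_le_nu2 {θ : ℝ} (hs : 0 < sin θ) : 1 + 1 / sin θ ≤ nu2 θ := by
  have hq0 : 0 < √(1 + |cos θ|) := sqrt_pos.mpr (by positivity)
  have hq2 : √(1 + |cos θ|) ≤ √2 := sqrt_le_sqrt (by linarith [abs_cos_le_one θ])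
  rw [nu2, add_le_add_iff_left, div_le_div_iff₀ hs (mul_pos hs hq0)]
  nlinarith

lemma three_fifths_le_abs_one_sub_sq_div_one_add_sq {t : ℝ} (ht : 0 ≤ t)
    (h : ¬(1 / 2 < t ∧ t < 2)) : 3 / 5 ≤ |(1 - t ^ 2) / (1 + t ^ 2)| := by
  have hpos : 0 < 1 + t ^ 2 := by positivity
  rcases not_and_or.mp h with ht' | ht'
  · refine le_abs.mpr (Or.inl ?_)
    rw [le_div_iff₀ hpos]
    nlinarith [not_lt.mp ht']
  · refine le_abs.mpr (Or.inr ?_)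
    rw [← neg_div, le_div_iff₀ hpos]
    nlinarith [not_lt.mp ht']

lemma three_fifths_le_abs_cos {θ : ℝ} (hθ : θ ∈ Set.Ioo 0 π)
    (h : ¬(1 / 2 < tan (θ / 2) ∧ tan (θ / 2) < 2)) : 3 / 5 ≤ |cos θ| := by
  obtain ⟨h0, hπ⟩ := hθ
  have hcos : cos θ ≠ -1 := fun hc => by
    have := sin_sq_add_cos_sq θ
    nlinarith [sin_pos_of_pos_of_lt_pi h0 hπ]
  have htan : 0 ≤ tan (θ / 2) :=
    tan_nonneg_of_nonneg_of_le_pi_div_two (by linarith) (by linarith)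
  rw [cos_eq_two_mul_tan_half_div_one_sub_tan_half_sq θ hcos]
  exact three_fifths_le_abs_one_sub_sq_div_one_add_sq htan h

lemma div_le_one_add_inv_of_sq_add_sq_eq_one {s c : ℝ} (hs : 0 < s) (hc : 3 / 5 ≤ c)
    (hsc : s ^ 2 + c ^ 2 = 1) : (1 + c) / (2 * (s + c - 1)) ≤ 1 + 1 / s := by
  have hc1 : c < 1 := by nlinarith
  have hden : 1 - c < s := by nlinarith [sq_nonneg (s - 1 + c)]
  have h2c : s ≤ 2 * c := by nlinarith [sq_nonneg (s - 2 * c)]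
  rw [one_add_div hs.ne', div_le_div_iff₀ (by linarith) hs]
  nlinarith [mul_nonneg (by linarith : (0 : ℝ) ≤ 1 - c) (by linarith : (0 : ℝ) ≤ 2 * c - s)]

lemma nu1_le_one_add_inv_sin {θ : ℝ} (hθ : θ ∈ Set.Ioo 0 π) : nu1 θ ≤ 1 + 1 / sin θ := by
  have hs : 0 < sin θ := sin_pos_of_pos_of_lt_pi hθ.1 hθ.2
  rw [nu1]
  split_ifs with h
  · have : 1 ≤ 1 / sin θ := (one_le_div hs).mpr (sin_le_one θ)
    linarith
  · refine div_le_one_add_inv_of_sq_add_sq_eq_one hs (three_fifths_le_abs_cos hθ h) ?_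
    rw [sq_abs, sin_sq_add_cos_sq]

/-- For every θ ∈ (0, π), ν₁(θ) ≤ ν₂(θ); consequently B₁ ≤ B₂ for
every fundamental domain. -/
theorem statement14 (θ : ℝ) (hθ : θ ∈ Set.Ioo 0 Real.pi) :
    nu1 θ ≤ nu2 θ ∧ ∀ c : ℝ, max (nu1 θ) c ≤ max (nu2 θ) c := by
  have key : nu1 θ ≤ nu2 θ :=
    (nu1_le_one_add_inv_sin hθ).trans
      (one_add_inv_sin_le_nu2 (sin_pos_of_pos_of_lt_pi hθ.1 hθ.2))
  exact ⟨key, fun c => max_le_max key le_rfl⟩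
end
end

section
/- Let ζ = i, η₁ = 1, η₂ = βi and ξ = −1 − βi, so that X = {x + yi : x ∈ [−1, 0), y ∈ [−β, 0)}. Then for all x ∈ [−1,0) and y ∈ [−β,0): (i) T(x + yi) = (−βy − ⌊−βy + 1⌋) + βx·i; (ii) T²(x + yi) = f(x) + g(y)·i, where f(x) = −β²x − ⌊−β²x + 1⌋ maps [−1,0) to itself and g(y) = −β²y − β⌊−βy + 1⌋ maps [−β,0) to itself; and (iii) g(βx) = β·f(x) for all x ∈ [−1,0). -/
/-!
`T z` is the unique point of `X` congruent to `βi·z` modulo `L`, because two points of a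
fundamental domain differing by a lattice vector coincide. For `z = x + yi` we have
`βi·z = -βy + βx·i`: the imaginary part `βx` already lies in `[-β, 0)`, and subtracting the
integer `⌊-βy + 1⌋` moves the real part into `[-1, 0)`. Applying this twice gives `T²`; the
bound on `g` comes from `g(y) = β·(-βy - ⌊-βy + 1⌋)`.
-/

open MeasureTheory Set Filter

noncomputable section

open Complex

lemma sub_mem_lat {η₁ η₂ a b : ℂ} (ha : a ∈ lat η₁ η₂) (hb : b ∈ lat η₁ η₂) :
    a - b ∈ lat η₁ η₂ := by
  obtain ⟨m, n, rfl⟩ := ha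
  obtain ⟨m', n', rfl⟩ := hb
  exact ⟨m - m', n - n', by push_cast; ring⟩

lemma eq_of_mem_Ico_of_sub_eq_intCast {x x' : ℝ} {m : ℤ} (hx : x ∈ Ico (0 : ℝ) 1)
    (hx' : x' ∈ Ico (0 : ℝ) 1) (h : x - x' = m) : x = x' := by
  have hm : |(m : ℝ)| < 1 := by
    rw [← h, abs_lt]
    constructor <;> linarith [hx.1, hx.2, hx'.1, hx'.2]
  rw [← Int.cast_abs, ← Int.cast_one, Int.cast_lt, Int.abs_lt_one_iff] at hm
  simp only [hm, Int.cast_zero] at h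
  linarith

lemma eq_of_mem_fund_of_sub_mem_lat {ξ η₁ η₂ z w : ℂ} (hη : LinearIndependent ℝ ![η₁, η₂])
    (hz : z ∈ fund ξ η₁ η₂) (hw : w ∈ fund ξ η₁ η₂) (hzw : z - w ∈ lat η₁ η₂) : z = w := by
  obtain ⟨x, y, hx, hy, rfl⟩ := hz
  obtain ⟨x', y', hx', hy', rfl⟩ := hw
  obtain ⟨m, n, hmn⟩ := hzw
  have hcoord := LinearIndependent.pair_iff.mp hη (x - x' - m) (y - y' - n) (by
    simp only [real_smul]; push_cast; linear_combination hmn)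
  rw [eq_of_mem_Ico_of_sub_eq_intCast hx hx' (sub_eq_zero.mp hcoord.1),
    eq_of_mem_Ico_of_sub_eq_intCast hy hy' (sub_eq_zero.mp hcoord.2)]

lemma map_eq_of_mem_fund {ξ η₁ η₂ c : ℂ} (hη : LinearIndependent ℝ ![η₁, η₂]) {T : ℂ → ℂ}
    (hT : ∀ z ∈ fund ξ η₁ η₂, T z ∈ fund ξ η₁ η₂ ∧ c * z - T z ∈ lat η₁ η₂)
    {z w : ℂ} (hz : z ∈ fund ξ η₁ η₂) (hw : w ∈ fund ξ η₁ η₂) (hzw : c * z - w ∈ lat η₁ η₂) :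
    T z = w := by
  obtain ⟨hTz, hcTz⟩ := hT z hz
  refine eq_of_mem_fund_of_sub_mem_lat hη hTz hw ?_
  simpa using sub_mem_lat hzw hcTz

lemma linearIndependent_one_ofReal_mul_I {β : ℝ} (hβ : β ≠ 0) :
    LinearIndependent ℝ ![(1 : ℂ), β * I] := by
  refine LinearIndependent.pair_iff.mpr fun s t hst => ⟨?_, ?_⟩
  · simpa using congrArg re hst
  · simpa [hβ] using congrArg im hst

lemma sub_floor_add_one_mem_Ico (u : ℝ) : u - (⌊u + 1⌋ : ℝ) ∈ Ico (-1 : ℝ) 0 := by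
  rw [Int.floor_add_one, Int.cast_add, Int.cast_one]
  constructor <;> linarith [Int.floor_le u, Int.lt_floor_add_one u]

lemma ofReal_add_ofReal_mul_I_mem_fund {β x y : ℝ} (hβ : 0 < β) (hx : x ∈ Ico (-1 : ℝ) 0)
    (hy : y ∈ Ico (-β) 0) : (x : ℂ) + y * I ∈ fund (-1 - β * I) 1 (β * I) := by
  refine ⟨x + 1, y / β + 1, ⟨by linarith [hx.1], by linarith [hx.2]⟩, ⟨?_, ?_⟩, ?_⟩
  · linarith [(le_div_iff₀ hβ).mpr (by linarith [hy.1] : -1 * β ≤ y)]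
  · linarith [div_neg_of_neg_of_pos hy.2 hβ]
  · have hβ' : (β : ℂ) ≠ 0 := ofReal_ne_zero.mpr hβ.ne'
    push_cast
    field_simp
    ring

lemma mul_mem_Ico_neg_one_zero {β t : ℝ} (hβ : 0 < β) (ht : t ∈ Ico (-1 : ℝ) 0) :
    β * t ∈ Ico (-β) 0 :=
  ⟨by nlinarith [ht.1], mul_neg_of_pos_of_neg hβ ht.2⟩

lemma map_ofReal_add_ofReal_mul_I {β : ℝ} (hβ : 0 < β) {T : ℂ → ℂ}
    (hT : ∀ z ∈ fund (-1 - β * I) 1 (β * I),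
      T z ∈ fund (-1 - β * I) 1 (β * I) ∧ β * I * z - T z ∈ lat 1 (β * I))
    {x y : ℝ} (hx : x ∈ Ico (-1 : ℝ) 0) (hy : y ∈ Ico (-β) 0) :
    T (x + y * I) = ((-β * y - (⌊-β * y + 1⌋ : ℝ) : ℝ) : ℂ) + ((β * x : ℝ) : ℂ) * I :=
  map_eq_of_mem_fund (linearIndependent_one_ofReal_mul_I hβ.ne') hT
    (ofReal_add_ofReal_mul_I_mem_fund hβ hx hy)
    (ofReal_add_ofReal_mul_I_mem_fund hβ (sub_floor_add_one_mem_Ico _)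
      (mul_mem_Ico_neg_one_zero hβ hx))
    ⟨⌊-β * y + 1⌋, 0, by push_cast; linear_combination (β * y : ℂ) * I_sq⟩

/-- With ζ = i, η₁ = 1, η₂ = βi, ξ = −1 − βi (so that
X = [−1,0) × [−β,0) in coordinates x + yi): formulas for T, T², the
coordinate maps f and g, and the conjugation g(βx) = βf(x). -/
theorem statement16
    (β : ℝ) (hβ : 1 < β)
    (T : ℂ → ℂ)
    (hT : ∀ z ∈ fund (-1 - (β : ℂ) * Complex.I) 1 ((β : ℂ) * Complex.I),
      T z ∈ fund (-1 - (β : ℂ) * Complex.I) 1 ((β : ℂ) * Complex.I) ∧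
      (β : ℂ) * Complex.I * z - T z ∈ lat 1 ((β : ℂ) * Complex.I)) :
    ∀ x ∈ Set.Ico (-1 : ℝ) 0, ∀ y ∈ Set.Ico (-β) 0,
      (T ((x : ℂ) + (y : ℂ) * Complex.I) =
        ((-β * y - (⌊-β * y + 1⌋ : ℝ) : ℝ) : ℂ) + ((β * x : ℝ) : ℂ) * Complex.I) ∧
      (T (T ((x : ℂ) + (y : ℂ) * Complex.I)) =
        ((-β ^ 2 * x - (⌊-β ^ 2 * x + 1⌋ : ℝ) : ℝ) : ℂ) +
          ((-β ^ 2 * y - β * (⌊-β * y + 1⌋ : ℝ) : ℝ) : ℂ) * Complex.I) ∧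
      (-β ^ 2 * x - (⌊-β ^ 2 * x + 1⌋ : ℝ)) ∈ Set.Ico (-1 : ℝ) 0 ∧
      (-β ^ 2 * y - β * (⌊-β * y + 1⌋ : ℝ)) ∈ Set.Ico (-β) 0 ∧
      (-β ^ 2 * (β * x) - β * (⌊-β * (β * x) + 1⌋ : ℝ)) =
        β * (-β ^ 2 * x - (⌊-β ^ 2 * x + 1⌋ : ℝ)) := by
  intro x hx y hy
  have hβ₀ : 0 < β := by linarith
  have hβx : -β * (β * x) = -β ^ 2 * x := by ring
  have hTz := map_ofReal_add_ofReal_mul_I hβ₀ hT hx hy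
  have hTTz := map_ofReal_add_ofReal_mul_I hβ₀ hT (sub_floor_add_one_mem_Ico (-β * y))
    (mul_mem_Ico_neg_one_zero hβ₀ hx)
  refine ⟨hTz, ?_, sub_floor_add_one_mem_Ico _, ?_, by rw [hβx]; ring⟩
  · rw [hTz, hTTz, hβx]
    push_cast
    ring
  · convert mul_mem_Ico_neg_one_zero hβ₀ (sub_floor_add_one_mem_Ico (-β * y)) using 1
    ring
end
end
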